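/- Let n be an odd natural number, G a group, and ρ : G → Matrix (Fin n) (Fin n) ℝ a multiplicative map with every ρ(g) invertible (a representation into GLₙ(ℝ)). Then there exists an ℝ-submodule W of (Fin n → ℝ) with W ≠ ⊥, W ≠ ⊤, invariant under all ρ(g) (i.e., (ρ g).mulVec v ∈ W for v ∈ W), if and only if there exists a ℂ-submodule V of (Fin n → ℂ) with V ≠ ⊥, V ≠ ⊤, invariant under all complexified matrices (ρ g).map (algebraMap ℝ ℂ). -/

import Mathlib

open Matrix Module

section Aux

variable (n : ℕ)

/-- Complexification of a real vector. -/
def cfVec (w : Fin n → ℝ) : Fin n → ℂ := fun i => (w i : ℂ)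

/-- Conjugate of a complex submodule of `ℂⁿ`. -/
noncomputable def conjSub (V : Submodule ℂ (Fin n → ℂ)) : Submodule ℂ (Fin n → ℂ) where
  carrier := {v | (fun i => (starRingEnd ℂ) (v i)) ∈ V}
  zero_mem' := by
    have h : (fun i => (starRingEnd ℂ) ((0 : Fin n → ℂ) i)) = (0 : Fin n → ℂ) :=
      funext fun i => map_zero _
    show (fun i => (starRingEnd ℂ) ((0 : Fin n → ℂ) i)) ∈ V
    rw [h]; exact V.zero_mem
  add_mem' := by
    intro a b ha hb
    show (fun i => (starRingEnd ℂ) (a i + b i)) ∈ V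
    convert V.add_mem ha hb using 1; funext i; simp [map_add]
  smul_mem' := by
    intro c v hv
    show (fun i => (starRingEnd ℂ) (c * v i)) ∈ V
    have := V.smul_mem ((starRingEnd ℂ) c) hv
    simpa [Pi.smul_def, smul_eq_mul, _root_.map_mul] using this

lemma mem_conjSub {V : Submodule ℂ (Fin n → ℂ)} {v : Fin n → ℂ} :
    v ∈ conjSub n V ↔ (fun i => (starRingEnd ℂ) (v i)) ∈ V := Iff.rfl

noncomputable def conjEquiv : (Fin n → ℂ) ≃ₗ[ℝ] (Fin n → ℂ) :=
  LinearEquiv.piCongrRight fun _ => Complex.conjAe.toLinearEquiv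

lemma finrank_conjSub (V : Submodule ℂ (Fin n → ℂ)) :
    finrank ℂ (conjSub n V) = finrank ℂ V := by
  have h1 : (conjSub n V).restrictScalars ℝ
      = Submodule.map (conjEquiv n).symm.toLinearMap (V.restrictScalars ℝ) := by
    rw [← Submodule.comap_equiv_eq_map_symm]; ext v; rfl
  have h2 : finrank ℝ ((conjSub n V).restrictScalars ℝ) = finrank ℝ (V.restrictScalars ℝ) := by
    rw [h1]
    exact LinearEquiv.finrank_map_eq (conjEquiv n).symm (V.restrictScalars ℝ)
  have h3 : finrank ℝ ℂ * finrank ℂ V = finrank ℝ (V.restrictScalars ℝ) :=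
    Module.finrank_mul_finrank ℝ ℂ V
  have h4 : finrank ℝ ℂ * finrank ℂ (conjSub n V) = finrank ℝ ((conjSub n V).restrictScalars ℝ) :=
    Module.finrank_mul_finrank ℝ ℂ (conjSub n V)
  rw [Complex.finrank_real_complex] at h3 h4
  omega

lemma mulVec_map_real (A : Matrix (Fin n) (Fin n) ℝ) (w : Fin n → ℝ) :
    (A.map (algebraMap ℝ ℂ)).mulVec (cfVec n w) = cfVec n (A.mulVec w) := by
  funext i
  simp [cfVec, Matrix.mulVec, dotProduct, Matrix.map_apply]

lemma conj_mulVec_real (A : Matrix (Fin n) (Fin n) ℝ) (v : Fin n → ℂ) :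
    (fun i => (starRingEnd ℂ) (((A.map (algebraMap ℝ ℂ)).mulVec v) i))
      = (A.map (algebraMap ℝ ℂ)).mulVec (fun i => (starRingEnd ℂ) (v i)) := by
  funext i
  simp [Matrix.mulVec, dotProduct, Matrix.map_apply, map_sum, Complex.conj_ofReal]

lemma complex_re_eq (u : ℂ) : ((u.re : ℂ)) = (1/2 : ℂ) * (u + (starRingEnd ℂ) u) := by
  rw [Complex.add_conj]; push_cast; ring

lemma complex_im_eq (u : ℂ) : ((u.im : ℂ)) = (-Complex.I/2) * (u - (starRingEnd ℂ) u) := by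
  rw [Complex.sub_conj]
  have h : Complex.I ^ 2 = -1 := Complex.I_sq
  push_cast
  linear_combination (u.im : ℂ) * h

/-- The real points of a complex submodule of `ℂⁿ`. -/
def realPoints (U : Submodule ℂ (Fin n → ℂ)) : Submodule ℝ (Fin n → ℝ) where
  carrier := {w | cfVec n w ∈ U}
  zero_mem' := by
    have h : cfVec n (0 : Fin n → ℝ) = (0 : Fin n → ℂ) := funext fun i => by simp [cfVec]
    show cfVec n (0 : Fin n → ℝ) ∈ U
    rw [h]; exact U.zero_mem
  add_mem' := by
    intro a b ha hb
    show cfVec n (a + b) ∈ U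
    have h : cfVec n (a + b) = cfVec n a + cfVec n b := funext fun i => by
      simp [cfVec]
    rw [h]; exact U.add_mem ha hb
  smul_mem' := by
    intro c w hw
    show cfVec n (c • w) ∈ U
    have h : cfVec n (c • w) = (c : ℂ) • cfVec n w := funext fun i => by
      simp [cfVec]
    rw [h]; exact U.smul_mem _ hw

lemma eq_top_of_singles_mem (U : Submodule ℂ (Fin n → ℂ))
    (hU : ∀ i : Fin n, cfVec n (Pi.single i 1) ∈ U) : U = ⊤ := by
  rw [Submodule.eq_top_iff']
  intro v
  have hv : v = ∑ i : Fin n, v i • cfVec n (Pi.single i 1) := by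
    funext j
    simp only [Finset.sum_apply, Pi.smul_apply, cfVec, Pi.single_apply, smul_eq_mul]
    push_cast
    rw [Finset.sum_eq_single j] <;> simp +contextual [eq_comm]
  rw [hv]
  exact Submodule.sum_mem _ fun i _ => U.smul_mem _ (hU i)

/-- From a conjugation-stable invariant complex subspace, get a real one. -/
lemma realPoints_works {G : Type*} (ρ : G → Matrix (Fin n) (Fin n) ℝ)
    (U : Submodule ℂ (Fin n → ℂ)) (hU0 : U ≠ ⊥) (hUt : U ≠ ⊤)
    (hconj : ∀ v ∈ U, (fun i => (starRingEnd ℂ) (v i)) ∈ U)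
    (hUinv : ∀ g : G, ∀ v ∈ U, ((ρ g).map (algebraMap ℝ ℂ)).mulVec v ∈ U) :
    ∃ W : Submodule ℝ (Fin n → ℝ), W ≠ ⊥ ∧ W ≠ ⊤ ∧
      ∀ g : G, ∀ v ∈ W, (ρ g).mulVec v ∈ W := by
  refine ⟨realPoints n U, ?_, ?_, ?_⟩
  · -- nonzero
    obtain ⟨u, huU, hu0⟩ := Submodule.exists_mem_ne_zero_of_ne_bot hU0
    intro hbot
    have hre : (fun i => (u i).re) ∈ realPoints n U := by
      show cfVec n (fun i => (u i).re) ∈ U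
      have h : cfVec n (fun i => (u i).re)
          = (1/2 : ℂ) • (u + fun i => (starRingEnd ℂ) (u i)) := by
        funext i; simpa [cfVec] using complex_re_eq (u i)
      rw [h]
      exact U.smul_mem _ (U.add_mem huU (hconj u huU))
    have him : (fun i => (u i).im) ∈ realPoints n U := by
      show cfVec n (fun i => (u i).im) ∈ U
      have h : cfVec n (fun i => (u i).im)
          = (-Complex.I/2 : ℂ) • (u - fun i => (starRingEnd ℂ) (u i)) := by
        funext i; simpa [cfVec] using complex_im_eq (u i)
      rw [h]
      exact U.smul_mem _ (U.sub_mem huU (hconj u huU))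
    rw [hbot, Submodule.mem_bot] at hre him
    apply hu0
    funext i
    exact Complex.ext (congrFun hre i) (congrFun him i)
  · -- proper
    intro htop
    apply hUt
    apply eq_top_of_singles_mem
    intro i
    have : (Pi.single i 1 : Fin n → ℝ) ∈ realPoints n U := by rw [htop]; trivial
    exact this
  · -- invariant
    intro g w hw
    show cfVec n ((ρ g).mulVec w) ∈ U
    rw [← mulVec_map_real]
    exact hUinv g _ hw

end Aux

/-- For `n` odd, a representation of a group `G` into `GLₙ(ℝ)` has a proper
nonzero invariant subspace over `ℝ` iff its complexification has one over `ℂ`;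
i.e. it is `ℝ`-irreducible iff it is `ℂ`-irreducible. -/
theorem real_reducible_iff_complex_reducible_odd
    (n : ℕ) (hn : Odd n)
    (G : Type*) [Group G] (ρ : G → Matrix (Fin n) (Fin n) ℝ)
    (hone : ρ 1 = 1) (hmul : ∀ g h : G, ρ (g * h) = ρ g * ρ h)
    (hinv : ∀ g : G, IsUnit (ρ g)) :
    (∃ W : Submodule ℝ (Fin n → ℝ), W ≠ ⊥ ∧ W ≠ ⊤ ∧
      ∀ g : G, ∀ v ∈ W, (ρ g).mulVec v ∈ W) ↔
    (∃ V : Submodule ℂ (Fin n → ℂ), V ≠ ⊥ ∧ V ≠ ⊤ ∧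
      ∀ g : G, ∀ v ∈ V, ((ρ g).map (algebraMap ℝ ℂ)).mulVec v ∈ V) := by
  constructor
  · -- real reducible → complex reducible
    rintro ⟨W, hW0, hWt, hWinv⟩
    refine ⟨Submodule.span ℂ (cfVec n '' (W : Set (Fin n → ℝ))), ?_, ?_, ?_⟩
    · -- nonzero
      obtain ⟨w, hwW, hw0⟩ := Submodule.exists_mem_ne_zero_of_ne_bot hW0
      intro hbot
      have : cfVec n w ∈ Submodule.span ℂ (cfVec n '' (W : Set (Fin n → ℝ))) :=
        Submodule.subset_span ⟨w, hwW, rfl⟩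
      rw [hbot, Submodule.mem_bot] at this
      apply hw0
      funext i
      have := congrFun this i
      simpa [cfVec] using this
    · -- proper
      intro htop
      have key : ∀ v ∈ Submodule.span ℂ (cfVec n '' (W : Set (Fin n → ℝ))),
          (fun i => (v i).re) ∈ W ∧ (fun i => (v i).im) ∈ W := by
        intro v hv
        induction hv using Submodule.span_induction with
        | mem x hx =>
          obtain ⟨w, hwW, rfl⟩ := hx
          constructor
          · have h : (fun i => ((cfVec n w) i).re) = w := funext fun i => by simp [cfVec]
            rw [h]; exact hwW
          · have h : (fun i => ((cfVec n w) i).im) = 0 := funext fun i => by simp [cfVec]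
            rw [h]; exact W.zero_mem
        | zero =>
          constructor
          · have h : (fun i => ((0 : Fin n → ℂ) i).re) = (0 : Fin n → ℝ) :=
              funext fun i => by simp
            rw [h]; exact W.zero_mem
          · have h : (fun i => ((0 : Fin n → ℂ) i).im) = (0 : Fin n → ℝ) :=
              funext fun i => by simp
            rw [h]; exact W.zero_mem
        | add x y _ _ hx hy =>
          constructor
          · have h : (fun i => ((x + y) i).re)
                = (fun i => (x i).re) + (fun i => (y i).re) := funext fun i => by simp
            rw [h]; exact W.add_mem hx.1 hy.1
          · have h : (fun i => ((x + y) i).im)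
                = (fun i => (x i).im) + (fun i => (y i).im) := funext fun i => by simp
            rw [h]; exact W.add_mem hx.2 hy.2
        | smul c x _ hx =>
          constructor
          · have h : (fun i => ((c • x) i).re)
                = c.re • (fun i => (x i).re) - c.im • (fun i => (x i).im) :=
              funext fun i => by simp [Complex.mul_re]
            rw [h]; exact W.sub_mem (W.smul_mem _ hx.1) (W.smul_mem _ hx.2)
          · have h : (fun i => ((c • x) i).im)
                = c.re • (fun i => (x i).im) + c.im • (fun i => (x i).re) :=
              funext fun i => by simp [Complex.mul_im]
            rw [h]; exact W.add_mem (W.smul_mem _ hx.2) (W.smul_mem _ hx.1)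
      apply hWt
      rw [Submodule.eq_top_iff']
      intro w
      have hmem : cfVec n w ∈ Submodule.span ℂ (cfVec n '' (W : Set (Fin n → ℝ))) := by
        rw [htop]; trivial
      have := (key _ hmem).1
      have h : (fun i => ((cfVec n w) i).re) = w := funext fun i => by simp [cfVec]
      rwa [h] at this
    · -- invariant
      intro g v hv
      induction hv using Submodule.span_induction with
      | mem x hx =>
        obtain ⟨w, hwW, rfl⟩ := hx
        rw [mulVec_map_real]
        exact Submodule.subset_span ⟨_, hWinv g w hwW, rfl⟩
      | zero => simp only [Matrix.mulVec_zero]; exact Submodule.zero_mem _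
      | add x y _ _ hx hy => rw [Matrix.mulVec_add]; exact Submodule.add_mem _ hx hy
      | smul c x _ hx => rw [Matrix.mulVec_smul]; exact Submodule.smul_mem _ _ hx
  · -- complex reducible → real reducible
    rintro ⟨V, hV0, hVt, hVinv⟩
    have hσinv : ∀ g : G, ∀ v ∈ conjSub n V, ((ρ g).map (algebraMap ℝ ℂ)).mulVec v ∈ conjSub n V := by
      intro g v hv
      rw [mem_conjSub] at hv ⊢
      rw [conj_mulVec_real]
      exact hVinv g _ hv
    by_cases hinf : V ⊓ conjSub n V = ⊥
    · by_cases hsup : V ⊔ conjSub n V = ⊤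
      · -- dimension contradiction with n odd
        exfalso
        have hd := Submodule.finrank_sup_add_finrank_inf_eq V (conjSub n V)
        rw [hinf, hsup] at hd
        have htop : finrank ℂ (⊤ : Submodule ℂ (Fin n → ℂ)) = n := by
          rw [finrank_top]
          simp [Module.finrank_pi]
        have hbot : finrank ℂ (⊥ : Submodule ℂ (Fin n → ℂ)) = 0 := finrank_bot ℂ _
        rw [htop, hbot, finrank_conjSub] at hd
        have heven : Even n := ⟨finrank ℂ V, by omega⟩
        exact (Nat.not_even_iff_odd.mpr hn) heven
      · -- use V ⊔ conjSub V
        apply realPoints_works n ρ (V ⊔ conjSub n V) ?_ hsup ?_ ?_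
        · intro hbot
          apply hV0
          rw [eq_bot_iff] at hbot ⊢
          exact le_trans le_sup_left hbot
        · intro v hv
          rw [Submodule.mem_sup] at hv ⊢
          obtain ⟨a, ha, b, hb, rfl⟩ := hv
          refine ⟨fun i => (starRingEnd ℂ) (b i), ?_, fun i => (starRingEnd ℂ) (a i), ?_, ?_⟩
          · rw [mem_conjSub] at hb
            simpa using hb
          · rw [mem_conjSub]
            simpa using ha
          · funext i; simp [map_add, add_comm]
        · intro g v hv
          rw [Submodule.mem_sup] at hv ⊢
          obtain ⟨a, ha, b, hb, rfl⟩ := hv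
          exact ⟨_, hVinv g a ha, _, hσinv g b hb, by rw [← Matrix.mulVec_add]⟩
    · -- use V ⊓ conjSub V
      apply realPoints_works n ρ (V ⊓ conjSub n V) hinf ?_ ?_ ?_
      · intro htop
        apply hVt
        rw [eq_top_iff] at htop ⊢
        exact le_trans htop inf_le_left
      · intro v hv
        rw [Submodule.mem_inf] at hv ⊢
        refine ⟨hv.2, ?_⟩
        rw [mem_conjSub]
        simpa using hv.1
      · intro g v hv
        rw [Submodule.mem_inf] at hv ⊢
        exact ⟨hVinv g v hv.1, hσinv g v hv.2⟩
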